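/- For every Borel probability measure F on valuation profiles, every menu 𝓜 and every 1 ≤ k ≤ N, E_F[Rᵏ_𝓜(v)] ≥ E_{F̄}[max_{X ∈ 𝓑(𝓜)} Σ_{b∈X} v_b] − (k−1)·|𝓜|·v̄/N, where F̄ = (1/N)Σₙ Fₙ is the average of the N bidder-marginals of F. -/

import Mathlib

open MeasureTheory
open scoped ENNReal BigOperators

namespace RankGuaranteedAuctions

/-- A bundle of items, where the set of items is `Fin M`. -/
abbrev Bundle (M : ℕ) := Finset (Fin M)

/-- A valuation assigns a real value to every bundle. -/
abbrev Valuation (M : ℕ) := Bundle M → ℝ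

/-- A valuation is normalized: value `0` for the empty bundle and values in `[0, vbar]`. -/
def IsValuation (M : ℕ) (vbar : ℝ) (v : Valuation M) : Prop :=
  v ∅ = 0 ∧ ∀ b : Bundle M, 0 ≤ v b ∧ v b ≤ vbar

/-- A menu is a nonempty collection of nonempty bundles. -/
def IsMenu (M : ℕ) (Menu : Finset (Bundle M)) : Prop :=
  Menu.Nonempty ∧ ∅ ∉ Menu

/-- The complete menu `2^S` of all nonempty bundles. -/
noncomputable def completeMenu (M : ℕ) : Finset (Bundle M) :=
  Finset.univ.erase ∅

/-- A feasible allocation: a set of pairwise disjoint bundles from the menu. -/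
def Feasible (M : ℕ) (Menu X : Finset (Bundle M)) : Prop :=
  X ⊆ Menu ∧ ∀ b ∈ X, ∀ b' ∈ X, b ≠ b' → Disjoint b b'

/-- The maximum of `∑ b ∈ X, f b` over feasible allocations `X` from the menu. -/
noncomputable def maxAlloc (M : ℕ) (Menu : Finset (Bundle M)) (f : Bundle M → ℝ) : ℝ :=
  sSup {y : ℝ | ∃ X : Finset (Bundle M), Feasible M Menu X ∧ y = ∑ b ∈ X, f b}

/-- The `k`-th highest value among `w 0, …, w (N-1)` (for `1 ≤ k ≤ N`):
the maximum over sets `T` of `k` bidders of the minimum of `w` on `T`. -/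
noncomputable def kthHighest (N : ℕ) (w : Fin N → ℝ) (k : ℕ) : ℝ :=
  sSup {x : ℝ | ∃ T : Finset (Fin N), T.card = k ∧ x = sInf (w '' (T : Set (Fin N)))}

/-- The `k`-th rank guarantee `R^k_𝓜(v)`. -/
noncomputable def rankGuarantee (M N : ℕ) (Menu : Finset (Bundle M))
    (v : Fin N → Valuation M) (k : ℕ) : ℝ :=
  maxAlloc M Menu fun b => kthHighest N (fun n => v n b) k

/-- The ex-post efficient surplus: the maximum over feasible allocations `X` with
`|X| ≤ N` and injective assignments `ι` of bundles in `X` to bidders of the total value. -/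
noncomputable def surplusEx (M N : ℕ) (Menu : Finset (Bundle M))
    (v : Fin N → Valuation M) : ℝ :=
  sSup {y : ℝ | ∃ X : Finset (Bundle M), Feasible M Menu X ∧ X.card ≤ N ∧
    ∃ ι : Bundle M → Fin N, Set.InjOn ι ↑X ∧ y = ∑ b ∈ X, v (ι b) b}

/-- The average `F̄ = (1/N) ∑ₙ Fₙ` of the bidder-marginals of `F`. -/
noncomputable def avgMarginal (M N : ℕ) (F : Measure (Fin N → Valuation M)) :
    Measure (Valuation M) :=
  (N : ℝ≥0∞)⁻¹ • ∑ n : Fin N, F.map (fun v => v n)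

/-- The ex-ante efficient surplus `V_𝓜(F)`. -/
noncomputable def Vsurplus (M N : ℕ) (Menu : Finset (Bundle M))
    (F : Measure (Fin N → Valuation M)) : ℝ :=
  ∫ v, surplusEx M N Menu v ∂F

/-- A Borel probability measure on valuation profiles (supported on profiles of
valuations bounded by `vbar`). -/
def ProfileOK (M N : ℕ) (vbar : ℝ) (F : Measure (Fin N → Valuation M)) : Prop :=
  IsProbabilityMeasure F ∧ F {v | ∀ n, IsValuation M vbar (v n)} = 1

/-- A Borel probability measure on valuations (supported on valuations bounded by `vbar`). -/
def ValOK (M : ℕ) (vbar : ℝ) (G : Measure (Valuation M)) : Prop :=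
  IsProbabilityMeasure G ∧ G {w | IsValuation M vbar w} = 1

/-- `κ` is a partition of the bundle `b` into nonempty, pairwise disjoint parts. -/
def IsPartitionOf (M : ℕ) (κ : Finset (Bundle M)) (b : Bundle M) : Prop :=
  (∀ c ∈ κ, c ≠ ∅) ∧ (∀ c ∈ κ, ∀ c' ∈ κ, c ≠ c' → Disjoint c c') ∧ κ.sup id = b

/-- Feasibility for homogeneous goods: total number of allocated items is at most `M`. -/
def FeasibleQ (M : ℕ) (Menu X : Finset (Bundle M)) : Prop :=
  X ⊆ Menu ∧ ∑ b ∈ X, b.card ≤ M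

/-- The maximum of `∑ b ∈ X, f b` over homogeneous-goods-feasible allocations `X`. -/
noncomputable def maxAllocQ (M : ℕ) (Menu : Finset (Bundle M)) (f : Bundle M → ℝ) : ℝ :=
  sSup {y : ℝ | ∃ X : Finset (Bundle M), FeasibleQ M Menu X ∧ y = ∑ b ∈ X, f b}

/-- An assignment of pairwise disjoint bundles to the `N` bidders. -/
def IsAssignment (M N : ℕ) (a : Fin N → Bundle M) : Prop :=
  ∀ n n' : Fin N, n ≠ n' → Disjoint (a n) (a n')

/-- An assignment is efficient if it maximizes total value over all assignments. -/
def IsEfficient (M N : ℕ) (v : Fin N → Valuation M) (a : Fin N → Bundle M) : Prop :=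
  IsAssignment M N a ∧
    ∀ a' : Fin N → Bundle M, IsAssignment M N a' → ∑ n, v n (a' n) ≤ ∑ n, v n (a n)

/-- The VCG revenue at the efficient assignment `a`: the sum over bidders `n` of
`max_{assignments to bidders other than n} ∑_{n' ≠ n} v^{n'} − ∑_{n' ≠ n} v^{n'}(a n')`. -/
noncomputable def vcgRevenue (M N : ℕ) (v : Fin N → Valuation M)
    (a : Fin N → Bundle M) : ℝ :=
  ∑ n : Fin N,
    (sSup {y : ℝ | ∃ a' : Fin N → Bundle M, IsAssignment M N a' ∧ a' n = ∅ ∧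
        y = ∑ n' ∈ Finset.univ.erase n, v n' (a' n')}
      - ∑ n' ∈ Finset.univ.erase n, v n' (a n'))

/-- An unbounded valuation: value `0` for the empty bundle and nonnegative values. -/
def IsValuationNN (M : ℕ) (v : Valuation M) : Prop :=
  v ∅ = 0 ∧ ∀ b : Bundle M, 0 ≤ v b

/-- The top-`(k-1)/N` quantile of `v b` under `G`. -/
noncomputable def quantileQ (M N k : ℕ) (G : Measure (Valuation M)) (b : Bundle M) : ℝ :=
  sInf {q : ℝ | 0 ≤ q ∧ G {w | q < w b} ≤ ((k - 1 : ℕ) : ℝ≥0∞) / (N : ℝ≥0∞)}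

/-!
Fix a profile `v` and let `q b` be the `k`-th highest value of bundle `b`. For each bidder `n`,
an allocation optimal for `vⁿ` is worth at most `R^k(v) + ∑_{b ∈ 𝓜} (vⁿ_b - q b)⁺`, because
`vⁿ_b ≤ q b + (vⁿ_b - q b)⁺`. Fewer than `k` bidders value `b` strictly above `q b`, so summing
over bidders gives `∑ₙ max_X ∑_{b ∈ X} vⁿ_b ≤ N · R^k(v) + (k - 1)|𝓜| v̄` pointwise. Integrating
against `F` and using `∫ g dF̄ = N⁻¹ ∑ₙ ∫ g(vⁿ) dF` gives the bound.
-/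

open Finset

section MaxAlloc

variable {M : ℕ}

def feasibleAllocs (Menu : Finset (Bundle M)) : Finset (Finset (Bundle M)) :=
  Menu.powerset.filter fun X => ∀ b ∈ X, ∀ b' ∈ X, b ≠ b' → Disjoint b b'

variable {Menu : Finset (Bundle M)}

lemma mem_feasibleAllocs {X : Finset (Bundle M)} :
    X ∈ feasibleAllocs Menu ↔ Feasible M Menu X := by
  simp [feasibleAllocs, Feasible]

lemma feasible_empty : Feasible M Menu ∅ :=
  ⟨empty_subset _, by simp⟩

lemma feasibleAllocs_nonempty : (feasibleAllocs Menu).Nonempty :=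
  ⟨∅, mem_feasibleAllocs.2 feasible_empty⟩

lemma maxAlloc_eq_sup' (f : Bundle M → ℝ) :
    maxAlloc M Menu f = (feasibleAllocs Menu).sup' feasibleAllocs_nonempty
      fun X => ∑ b ∈ X, f b := by
  rw [sup'_eq_csSup_image, maxAlloc]
  congr 1
  ext y
  simp [mem_feasibleAllocs, eq_comm]

lemma sum_le_maxAlloc (f : Bundle M → ℝ) {X : Finset (Bundle M)} (hX : Feasible M Menu X) :
    ∑ b ∈ X, f b ≤ maxAlloc M Menu f := by
  rw [maxAlloc_eq_sup']
  exact le_sup' (fun X => ∑ b ∈ X, f b) (mem_feasibleAllocs.2 hX)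

lemma exists_feasible_maxAlloc_eq (f : Bundle M → ℝ) :
    ∃ X, Feasible M Menu X ∧ maxAlloc M Menu f = ∑ b ∈ X, f b := by
  obtain ⟨X, hX, h⟩ := exists_mem_eq_sup' _ fun X => ∑ b ∈ X, f b
  exact ⟨X, mem_feasibleAllocs.1 hX, (maxAlloc_eq_sup' f).trans h⟩

lemma maxAlloc_nonneg (f : Bundle M → ℝ) : 0 ≤ maxAlloc M Menu f := by
  simpa using sum_le_maxAlloc f (feasible_empty (Menu := Menu))

lemma maxAlloc_le_card_mul {f : Bundle M → ℝ} {c : ℝ} (hf : ∀ b, 0 ≤ f b ∧ f b ≤ c) :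
    maxAlloc M Menu f ≤ #Menu * c := by
  obtain ⟨X, hX, h⟩ := exists_feasible_maxAlloc_eq (Menu := Menu) f
  calc maxAlloc M Menu f = ∑ b ∈ X, f b := h
    _ ≤ ∑ b ∈ Menu, f b := sum_le_sum_of_subset_of_nonneg hX.1 fun b _ _ => (hf b).1
    _ ≤ #Menu * c := by simpa using sum_le_card_nsmul Menu f c fun b _ => (hf b).2

lemma maxAlloc_le_add_sum_posPart (f g : Bundle M → ℝ) :
    maxAlloc M Menu f ≤ maxAlloc M Menu g + ∑ b ∈ Menu, (f b - g b)⁺ := by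
  obtain ⟨X, hX, h⟩ := exists_feasible_maxAlloc_eq (Menu := Menu) f
  calc maxAlloc M Menu f = ∑ b ∈ X, f b := h
    _ ≤ ∑ b ∈ X, (g b + (f b - g b)⁺) :=
      sum_le_sum fun b _ => by linarith [le_posPart (f b - g b)]
    _ = ∑ b ∈ X, g b + ∑ b ∈ X, (f b - g b)⁺ := sum_add_distrib
    _ ≤ maxAlloc M Menu g + ∑ b ∈ Menu, (f b - g b)⁺ :=
      add_le_add (sum_le_maxAlloc g hX)
        (sum_le_sum_of_subset_of_nonneg hX.1 fun b _ _ => posPart_nonneg _)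

lemma measurable_maxAlloc : Measurable (maxAlloc M Menu) := by
  have h : maxAlloc M Menu = (feasibleAllocs Menu).sup' feasibleAllocs_nonempty
      fun X (f : Valuation M) => ∑ b ∈ X, f b := by
    funext f
    rw [maxAlloc_eq_sup', Finset.sup'_apply]
  rw [h]
  exact measurable_sup' _ fun X _ => measurable_sum _ fun b _ => measurable_pi_apply b

lemma integrable_maxAlloc_comp {Ω : Type*} [MeasurableSpace Ω] {μ : Measure Ω}
    [IsFiniteMeasure μ] {φ : Ω → Valuation M} (hφ : Measurable φ) {c : ℝ}
    (hbound : ∀ᵐ ω ∂μ, ∀ b, 0 ≤ φ ω b ∧ φ ω b ≤ c) :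
    Integrable (fun ω => maxAlloc M Menu (φ ω)) μ :=
  .of_bound (measurable_maxAlloc.comp hφ).aestronglyMeasurable (#Menu * c) <|
    hbound.mono fun ω hω => by
      rw [Real.norm_of_nonneg (maxAlloc_nonneg _)]
      exact maxAlloc_le_card_mul hω

end MaxAlloc

section KthHighest

variable {N k : ℕ} (w : Fin N → ℝ)

lemma powersetCard_univ_fin_nonempty (hkN : k ≤ N) :
    (univ.powersetCard k : Finset (Finset (Fin N))).Nonempty :=
  powersetCard_nonempty.2 (by simpa using hkN)

lemma kthHighest_eq_sup' (hkN : k ≤ N) :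
    kthHighest N w k = (univ.powersetCard k).sup' (powersetCard_univ_fin_nonempty hkN)
      fun T => sInf (w '' T) := by
  rw [sup'_eq_csSup_image, kthHighest]
  congr 1
  ext x
  simp [eq_comm]

lemma inf'_le_kthHighest {T : Finset (Fin N)} (hT : #T = k) (hne : T.Nonempty) :
    T.inf' hne w ≤ kthHighest N w k := by
  rw [kthHighest_eq_sup' w (hT ▸ T.card_le_univ.trans_eq (Fintype.card_fin N)),
    inf'_eq_csInf_image]
  exact le_sup' (fun T : Finset (Fin N) => sInf (w '' T)) (mem_powersetCard_univ.2 hT)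

lemma kthHighest_nonneg (hw : ∀ n, 0 ≤ w n) : 0 ≤ kthHighest N w k :=
  Real.sSup_nonneg <| by
    rintro _ ⟨T, -, rfl⟩
    exact Real.sInf_nonneg <| by
      rintro _ ⟨n, -, rfl⟩
      exact hw n

lemma kthHighest_le {c : ℝ} (hw : ∀ n, w n ≤ c) (hk : 0 < k) (hkN : k ≤ N) :
    kthHighest N w k ≤ c := by
  rw [kthHighest_eq_sup' w hkN]
  refine sup'_le _ _ fun T hT => ?_
  obtain ⟨n, hn⟩ : T.Nonempty := card_pos.1 ((mem_powersetCard_univ.1 hT).symm ▸ hk)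
  rw [← inf'_eq_csInf_image T ⟨n, hn⟩]
  exact inf'_le_of_le w hn (hw n)

lemma card_above_kthHighest_lt (hk : 0 < k) : #{n | kthHighest N w k < w n} < k := by
  by_contra! h
  obtain ⟨T, hTsub, hT⟩ := exists_subset_card_eq h
  have hne : T.Nonempty := card_pos.1 (hT ▸ hk)
  obtain ⟨n, hn, hmin⟩ := exists_mem_eq_inf' hne w
  have hle := inf'_le_kthHighest w hT hne
  have hlt := (mem_filter.1 (hTsub hn)).2
  linarith

lemma sum_posPart_sub_kthHighest_le {c : ℝ} (hw : ∀ n, 0 ≤ w n ∧ w n ≤ c) (hc : 0 ≤ c)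
    (hk : 0 < k) : ∑ n, (w n - kthHighest N w k)⁺ ≤ (k - 1) * c := by
  set q := kthHighest N w k
  have hq : 0 ≤ q := kthHighest_nonneg w fun n => (hw n).1
  have hcard : (#{n | q < w n} : ℝ) ≤ k - 1 := by
    rw [le_sub_iff_add_le]
    exact_mod_cast card_above_kthHighest_lt w hk
  calc ∑ n, (w n - q)⁺ = ∑ n with q < w n, (w n - q)⁺ :=
        (sum_filter_of_ne fun n _ h =>
          sub_pos.1 (posPart_pos_iff.1 ((posPart_nonneg _).lt_of_ne' h))).symm
    _ ≤ #{n | q < w n} • c :=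
        sum_le_card_nsmul _ _ _ fun n _ => by
          rw [posPart_def]
          exact sup_le (by linarith [(hw n).2]) hc
    _ ≤ (k - 1) * c := by
        rw [nsmul_eq_mul]
        exact mul_le_mul_of_nonneg_right hcard hc

lemma measurable_kthHighest (hk : 0 < k) (hkN : k ≤ N) :
    Measurable fun w : Fin N → ℝ => kthHighest N w k := by
  have h : (fun w : Fin N → ℝ => kthHighest N w k) = (univ.powersetCard k).sup'
      (powersetCard_univ_fin_nonempty hkN) fun T w => sInf (w '' T) := by
    funext w
    rw [kthHighest_eq_sup' w hkN, Finset.sup'_apply]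
  rw [h]
  refine measurable_sup' _ fun T hT => ?_
  have hne : T.Nonempty := card_pos.1 ((mem_powersetCard_univ.1 hT).symm ▸ hk)
  have hinf : (fun w : Fin N → ℝ => sInf (w '' T)) = T.inf' hne fun n w => w n := by
    funext w
    rw [Finset.inf'_apply, inf'_eq_csInf_image]
  rw [hinf]
  exact inf'_induction hne _ (fun _ hf _ hg => hf.inf hg) fun n _ => measurable_pi_apply n

end KthHighest

section RankGuarantee

variable {M N k : ℕ} {vbar : ℝ}

lemma sum_maxAlloc_le_rankGuarantee (hvbar : 0 ≤ vbar) (Menu : Finset (Bundle M))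
    {v : Fin N → Valuation M} (hv : ∀ n, IsValuation M vbar (v n)) (hk : 0 < k) :
    ∑ n, maxAlloc M Menu (v n) ≤
      N * rankGuarantee M N Menu v k + (k - 1) * #Menu * vbar := by
  set q : Bundle M → ℝ := fun b => kthHighest N (fun n => v n b) k
  calc ∑ n, maxAlloc M Menu (v n)
      ≤ ∑ n, (rankGuarantee M N Menu v k + ∑ b ∈ Menu, (v n b - q b)⁺) :=
        sum_le_sum fun n _ => maxAlloc_le_add_sum_posPart _ _
    _ = N * rankGuarantee M N Menu v k + ∑ b ∈ Menu, ∑ n, (v n b - q b)⁺ := by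
        rw [sum_add_distrib, sum_comm]
        simp
    _ ≤ N * rankGuarantee M N Menu v k + ∑ _b ∈ Menu, (k - 1) * vbar := by
        gcongr with b
        exact sum_posPart_sub_kthHighest_le _ (fun n => (hv n).2 b) hvbar hk
    _ = N * rankGuarantee M N Menu v k + (k - 1) * #Menu * vbar := by
        rw [sum_const, nsmul_eq_mul]
        ring

lemma measurable_kthHighest_profile (hk : 0 < k) (hkN : k ≤ N) :
    Measurable fun (v : Fin N → Valuation M) (b : Bundle M) => kthHighest N (fun n => v n b) k :=
  measurable_pi_lambda _ fun b => (measurable_kthHighest hk hkN).comp <|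
    measurable_pi_lambda _ fun n => (measurable_pi_apply b).comp (measurable_pi_apply n)

end RankGuarantee

section Measures

variable {M N : ℕ} {vbar : ℝ} {F : Measure (Fin N → Valuation M)}

lemma measurableSet_isValuation : MeasurableSet {w : Valuation M | IsValuation M vbar w} := by
  simp only [IsValuation, Set.ofPred_and, Set.ofPred_forall]
  measurability

lemma ae_isValuation [IsProbabilityMeasure F] (hF : F {v | ∀ n, IsValuation M vbar (v n)} = 1) :
    ∀ᵐ v ∂F, ∀ n, IsValuation M vbar (v n) := by
  refine (ae_iff_measure_eq ?_).2 (by rw [hF, measure_univ])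
  simp only [Set.ofPred_forall]
  exact (MeasurableSet.iInter fun n =>
    measurableSet_isValuation.preimage (measurable_pi_apply n)).nullMeasurableSet

lemma integral_avgMarginal {g : Valuation M → ℝ} (hg : Measurable g)
    (hgF : ∀ n, Integrable (fun v => g (v n)) F) :
    ∫ w, g w ∂avgMarginal M N F = (N : ℝ)⁻¹ * ∫ v, ∑ n, g (v n) ∂F := by
  have hmap : ∀ n : Fin N, ∫ w, g w ∂F.map (· n) = ∫ v, g (v n) ∂F := fun n =>
    integral_map (measurable_pi_apply n).aemeasurable hg.aestronglyMeasurable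
  rw [avgMarginal, integral_smul_measure, integral_finsetSum_measure fun n _ => ?_,
    integral_finsetSum _ fun n _ => hgF n]
  · simp [hmap, ENNReal.toReal_inv]
  · exact (integrable_map_measure hg.aestronglyMeasurable
      (measurable_pi_apply n).aemeasurable).2 (hgF n)

end Measures

theorem expected_rank_guarantee_bound_general
    (M N : ℕ) (vbar : ℝ) (hvbar : 0 ≤ vbar)
    (F : Measure (Fin N → Valuation M)) [IsProbabilityMeasure F]
    (hF : F {v | ∀ n, IsValuation M vbar (v n)} = 1)
    (Menu : Finset (Bundle M))
    (k : ℕ) (hk1 : 1 ≤ k) (hkN : k ≤ N) :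
    ∫ v, rankGuarantee M N Menu v k ∂F ≥
      (∫ w, maxAlloc M Menu w ∂(avgMarginal M N F))
        - ((k : ℝ) - 1) * (Menu.card : ℝ) * vbar / (N : ℝ) := by
  have hN : (0 : ℝ) < N := by exact_mod_cast hk1.trans hkN
  have hae := ae_isValuation hF
  have hbidder : ∀ n, Integrable (fun v => maxAlloc M Menu (v n)) F := fun n =>
    integrable_maxAlloc_comp (measurable_pi_apply n) (hae.mono fun v hv => (hv n).2)
  have hrank : Integrable (fun v => rankGuarantee M N Menu v k) F :=
    integrable_maxAlloc_comp (measurable_kthHighest_profile hk1 hkN) <| hae.mono fun v hv b =>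
      ⟨kthHighest_nonneg _ fun n => ((hv n).2 b).1,
        kthHighest_le _ (fun n => ((hv n).2 b).2) hk1 hkN⟩
  set C := ((k : ℝ) - 1) * #Menu * vbar
  have hpointwise : ∫ v, ∑ n, maxAlloc M Menu (v n) ∂F
      ≤ ∫ v, (N * rankGuarantee M N Menu v k + C) ∂F :=
    integral_mono_ae (integrable_finsetSum _ fun n _ => hbidder n)
      ((hrank.const_mul _).add (integrable_const _))
      (hae.mono fun v hv => sum_maxAlloc_le_rankGuarantee hvbar Menu hv hk1)
  rw [integral_add (hrank.const_mul _) (integrable_const _), integral_const_mul,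
    integral_const, probReal_univ, one_smul] at hpointwise
  rw [ge_iff_le, sub_le_iff_le_add, integral_avgMarginal measurable_maxAlloc hbidder,
    inv_mul_le_iff₀ hN]
  calc ∫ v, ∑ n, maxAlloc M Menu (v n) ∂F
      ≤ N * ∫ v, rankGuarantee M N Menu v k ∂F + C := hpointwise
    _ = N * (∫ v, rankGuarantee M N Menu v k ∂F + C / N) := by field_simp

/-- For every Borel probability measure `F` on valuation profiles, every menu
`𝓜` and every `1 ≤ k ≤ N`,
`E_F[R^k_𝓜(v)] ≥ E_{F̄}[max_{X ∈ 𝓑(𝓜)} ∑_{b∈X} v_b] − (k−1)·|𝓜|·v̄/N`,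
where `F̄ = (1/N) ∑ₙ Fₙ` is the average of the bidder-marginals of `F`. -/
theorem expected_rank_guarantee_bound
    (M N : ℕ) (hM : 1 ≤ M) (vbar : ℝ) (hvbar : 0 ≤ vbar)
    (F : Measure (Fin N → Valuation M)) [IsProbabilityMeasure F]
    (hF : F {v | ∀ n, IsValuation M vbar (v n)} = 1)
    (Menu : Finset (Bundle M)) (hMenu : IsMenu M Menu)
    (k : ℕ) (hk1 : 1 ≤ k) (hkN : k ≤ N) :
    ∫ v, rankGuarantee M N Menu v k ∂F ≥
      (∫ w, maxAlloc M Menu w ∂(avgMarginal M N F))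
        - ((k : ℝ) - 1) * (Menu.card : ℝ) * vbar / (N : ℝ) :=
  expected_rank_guarantee_bound_general M N vbar hvbar F hF Menu k hk1 hkN

end RankGuaranteedAuctions
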